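/- The dissimilarity index D6 satisfies the triangle inequality: for all n×n pairwise comparison matrices A, B, C, one has D6(A,C) ≤ D6(A,B) + D6(B,C). -/
import Mathlib


/-- An `n × n` real matrix is a pairwise comparison matrix (PCM) if all entries are
positive and it is reciprocal: `A j i = 1 / A i j`. -/
def IsPCM {n : ℕ} (A : Matrix (Fin n) (Fin n) ℝ) : Prop :=
  ∀ i j, 0 < A i j ∧ A j i = 1 / A i j

/-- The dissimilarity index `D6`, summing over the pairs `i < j` above the diagonal. -/
noncomputable def D6 {n : ℕ} (A B : Matrix (Fin n) (Fin n) ℝ) : ℝ :=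
  -((2 / ((n : ℝ) * ((n : ℝ) - 1))) *
    ∑ i, ∑ j, if i < j then min (A i j * B j i) (A j i * B i j) - 1 else 0)

lemma D6_key (a b c : ℝ) (ha : 0 < a) (hb : 0 < b) (hc : 0 < c) :
    min (a * (1/b)) ((1/a) * b) + min (b * (1/c)) ((1/b) * c) ≤
      min (a * (1/c)) ((1/a) * c) + 1 := by
  set u := min (a * (1/b)) ((1/a) * b) with hu
  set v := min (b * (1/c)) ((1/b) * c) with hv
  have hu0 : 0 < u := lt_min (by positivity) (by positivity)
  have hv0 : 0 < v := lt_min (by positivity) (by positivity)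
  have hu1 : u ≤ 1 := by
    rcases le_total a b with h | h
    · refine le_trans (min_le_left _ _) ?_
      rw [mul_one_div, div_le_one hb]; exact h
    · refine le_trans (min_le_right _ _) ?_
      rw [one_div_mul_eq_div, div_le_one ha]; exact h
  have hv1 : v ≤ 1 := by
    rcases le_total b c with h | h
    · refine le_trans (min_le_left _ _) ?_
      rw [mul_one_div, div_le_one hc]; exact h
    · refine le_trans (min_le_right _ _) ?_
      rw [one_div_mul_eq_div, div_le_one hb]; exact h
  have huv1 : u * v ≤ a * (1/c) := by
    have h1 : u ≤ a * (1/b) := min_le_left _ _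
    have h2 : v ≤ b * (1/c) := min_le_left _ _
    calc u * v ≤ (a * (1/b)) * (b * (1/c)) :=
          mul_le_mul h1 h2 hv0.le (by positivity)
      _ = a * (1/c) := by field_simp
  have huv2 : u * v ≤ (1/a) * c := by
    have h1 : u ≤ (1/a) * b := min_le_right _ _
    have h2 : v ≤ (1/b) * c := min_le_right _ _
    calc u * v ≤ ((1/a) * b) * ((1/b) * c) :=
          mul_le_mul h1 h2 hv0.le (by positivity)
      _ = (1/a) * c := by field_simp
  have huv : u * v ≤ min (a * (1/c)) ((1/a) * c) := le_min huv1 huv2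
  nlinarith [mul_nonneg (sub_nonneg.2 hu1) (sub_nonneg.2 hv1)]

/-- `D6` satisfies the triangle inequality on pairwise comparison matrices. -/
theorem D6_triangle_inequality {n : ℕ} (A B C : Matrix (Fin n) (Fin n) ℝ)
    (hA : IsPCM A) (hB : IsPCM B) (hC : IsPCM C) :
    D6 A C ≤ D6 A B + D6 B C := by
  have hk : (0:ℝ) ≤ 2 / ((n : ℝ) * ((n : ℝ) - 1)) := by
    apply div_nonneg (by norm_num)
    rcases Nat.eq_zero_or_pos n with h | h
    · simp [h]
    · have h1 : (1:ℝ) ≤ (n:ℝ) := by exact_mod_cast h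
      nlinarith
  have hsum : (∑ i, ∑ j, if i < j then min (A i j * B j i) (A j i * B i j) - 1 else 0)
      + (∑ i, ∑ j, if i < j then min (B i j * C j i) (B j i * C i j) - 1 else 0)
      ≤ ∑ i, ∑ j, if i < j then min (A i j * C j i) (A j i * C i j) - 1 else 0 := by
    rw [← Finset.sum_add_distrib]
    refine Finset.sum_le_sum fun i _ => ?_
    rw [← Finset.sum_add_distrib]
    refine Finset.sum_le_sum fun j _ => ?_
    split_ifs with h
    · have ha := (hA i j).1
      have hb := (hB i j).1
      have hc := (hC i j).1
      have ha' := (hA i j).2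
      have hb' := (hB i j).2
      have hc' := (hC i j).2
      rw [ha', hb', hc']
      have := D6_key (A i j) (B i j) (C i j) ha hb hc
      have hBA : A j i * B i j = (1/(A i j)) * B i j := by rw [ha']
      linarith [this]
    · simp
  have hmul := mul_le_mul_of_nonneg_left hsum hk
  simp only [D6]
  nlinarith [hmul]
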